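/- The classes of generalized fighting fish and of fighting fish are closed under word duality: if F is a generalized fighting fish (respectively, a fighting fish), then the dual word of F is again a generalized fighting fish (respectively, a fighting fish). -/

import Mathlib

/-- The four-letter alphabet of steps. -/
inductive Letter : Type
  | E | N | W | S
deriving DecidableEq, Repr

open Letter

/-- Fighting fish: words obtainable from `ENWS` by upper, lower and double gluings. -/
inductive IsFF : List Letter → Prop
  | base : IsFF [E, N, W, S]
  | upper (u v : List Letter) :
      IsFF (u ++ [W] ++ v) → IsFF (u ++ [N, W, S] ++ v)
  | lower (u v : List Letter) :
      IsFF (u ++ [N] ++ v) → IsFF (u ++ [E, N, W] ++ v)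
  | double (u v : List Letter) :
      IsFF (u ++ [W, N] ++ v) → IsFF (u ++ [N, W] ++ v)

/-- Generalized fighting fish: words obtainable from the empty word by the
operations `∇_k` (replace `N^k` by `E N^k W`) and `△_k` (replace `W^k` by `N W^k S`),
for `k ≥ 0`. -/
inductive IsGFF : List Letter → Prop
  | base : IsGFF []
  | nabla (u v : List Letter) (k : ℕ) :
      IsGFF (u ++ List.replicate k N ++ v) →
      IsGFF (u ++ [E] ++ List.replicate k N ++ [W] ++ v)
  | delta (u v : List Letter) (k : ℕ) :
      IsGFF (u ++ List.replicate k W ++ v) →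
      IsGFF (u ++ [N] ++ List.replicate k W ++ [S] ++ v)

/-- The latitude of a word: number of `N`'s minus number of `S`'s. -/
def lat (w : List Letter) : ℤ := (w.count N : ℤ) - (w.count S : ℤ)

/-- The longitude of a word: number of `E`'s minus number of `W`'s. -/
def long (w : List Letter) : ℤ := (w.count E : ℤ) - (w.count W : ℤ)

/-- The size of a word: half its length. -/
def size (w : List Letter) : ℕ := w.length / 2

/-- The dual of a letter: `E ↦ S`, `N ↦ W`, `W ↦ N`, `S ↦ E`. -/
def dualLetter : Letter → Letter
  | E => S
  | N => W
  | W => N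
  | S => E

/-- The dual of a word: reverse it and dualize each letter. -/
def dual (w : List Letter) : List Letter := w.reverse.map dualLetter

@[simp]
lemma dual_append (a b : List Letter) : dual (a ++ b) = dual b ++ dual a := by
  simp [dual]

@[simp]
lemma dual_replicate (k : ℕ) (a : Letter) :
    dual (List.replicate k a) = List.replicate k (dualLetter a) := by
  simp [dual]

@[simp]
lemma dual_cons (a : Letter) (w : List Letter) : dual (a :: w) = dual w ++ [dualLetter a] := by
  simp [dual]

/-- Duality exchanges `∇_k` and `△_k`. -/
theorem IsGFF.dual_isGFF {w : List Letter} (h : IsGFF w) : IsGFF (dual w) := by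
  induction h with
  | base => exact IsGFF.base
  | nabla u v k _ ih =>
    simpa [dualLetter] using IsGFF.delta (dual v) (dual u) k (by simpa [dualLetter] using ih)
  | delta u v k _ ih =>
    simpa [dualLetter] using IsGFF.nabla (dual v) (dual u) k (by simpa [dualLetter] using ih)

/-- Duality exchanges upper and lower gluings and preserves double gluings and `ENWS`. -/
theorem IsFF.dual_isFF {w : List Letter} (h : IsFF w) : IsFF (dual w) := by
  induction h with
  | base => exact IsFF.base
  | upper u v _ ih =>
    simpa [dualLetter] using IsFF.lower (dual v) (dual u) (by simpa [dualLetter] using ih)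
  | lower u v _ ih =>
    simpa [dualLetter] using IsFF.upper (dual v) (dual u) (by simpa [dualLetter] using ih)
  | double u v _ ih =>
    simpa [dualLetter] using IsFF.double (dual v) (dual u) (by simpa [dualLetter] using ih)

/-- The classes of generalized fighting fish and of fighting fish are closed under
word duality. -/
theorem dual_closure :
    (∀ w : List Letter, IsGFF w → IsGFF (dual w)) ∧
    (∀ w : List Letter, IsFF w → IsFF (dual w)) :=
  ⟨fun _ => IsGFF.dual_isGFF, fun _ => IsFF.dual_isFF⟩
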